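/- arXiv:2109.03163 — 6 statements merged into one kernel-verified Lean document; each statement's English description precedes it below -/
import Mathlib

section
/- For every integer p ≥ 3 and every real r with -1 < r < 1, one has |r^{p-2}(1 - r^2)| < 2/p. -/
lemma key_ineq (n : ℕ) (hn : 1 ≤ n) (x : ℝ) (hx0 : 0 ≤ x) (hx1 : x < 1) :
    x ^ n * (1 - x ^ 2) < 2 / (n + 2) := by
  have hpos : (0:ℝ) < (n:ℝ) + 2 := by positivity
  rw [lt_div_iff₀ hpos]
  rcases eq_or_lt_of_le hx0 with h0 | h0
  · simp [← h0, zero_pow (by omega : n ≠ 0)]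
  -- S = geometric sum
  set S : ℝ := ∑ k ∈ Finset.range (n + 2), x ^ k with hS
  have hgeom : (1 - x) * S = 1 - x ^ (n + 2) := by
    have := geom_sum_mul x (n + 2)
    rw [hS]
    nlinarith [this]
  have hSsplit : S = (∑ k ∈ Finset.range (n + 1), x ^ k) + x ^ (n + 1) := by
    rw [hS, Finset.sum_range_succ]
  have hterm : ∀ k ∈ Finset.range (n + 1), x ^ n ≤ x ^ k := by
    intro k hk
    exact pow_le_pow_of_le_one hx0 hx1.le (by simpa using Finset.mem_range_succ_iff.mp hk)
  have hsum : (n + 1 : ℝ) * x ^ n ≤ ∑ k ∈ Finset.range (n + 1), x ^ k := by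
    have := Finset.card_nsmul_le_sum (Finset.range (n + 1)) (fun k => x ^ k) (x ^ n)
      (fun k hk => hterm k hk)
    simpa [nsmul_eq_mul] using this
  have hS_ge : ((n:ℝ) + 1) * x ^ n + x ^ (n + 1) ≤ S := by
    rw [hSsplit]; push_cast at hsum ⊢; linarith
  have hxn1 : x ^ (n + 1) ≤ x ^ n :=
    pow_le_pow_of_le_one hx0 hx1.le (by omega)
  -- key: (n+2) x^n (1+x) ≤ 2 S
  have hkey : ((n:ℝ) + 2) * (x ^ n * (1 + x)) ≤ 2 * S := by
    have hx' : x ^ n * x = x ^ (n + 1) := by ring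
    have hcast : (0:ℝ) ≤ (n:ℝ) := Nat.cast_nonneg n
    nlinarith [hS_ge, hxn1]
  have h1x : 0 < 1 - x := by linarith
  have hfin : ((n:ℝ) + 2) * (x ^ n * (1 - x ^ 2)) ≤ 2 * (1 - x ^ (n + 2)) := by
    have := mul_le_mul_of_nonneg_left hkey h1x.le
    calc ((n:ℝ) + 2) * (x ^ n * (1 - x ^ 2))
        = (1 - x) * (((n:ℝ) + 2) * (x ^ n * (1 + x))) := by ring
      _ ≤ (1 - x) * (2 * S) := this
      _ = 2 * ((1 - x) * S) := by ring
      _ = 2 * (1 - x ^ (n + 2)) := by rw [hgeom]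
  have hxm : 0 < x ^ (n + 2) := pow_pos h0 _
  nlinarith [hfin, hxm]

theorem stmt_0 (p : ℕ) (hp : 3 ≤ p) (r : ℝ) (hr1 : -1 < r) (hr2 : r < 1) :
    |r ^ (p - 2) * (1 - r ^ 2)| < (2 : ℝ) / p := by
  have habs : |r| < 1 := abs_lt.mpr ⟨hr1, hr2⟩
  have hr2le : r ^ 2 ≤ 1 := by nlinarith [sq_abs r, abs_nonneg r]
  have heq : |r ^ (p - 2) * (1 - r ^ 2)| = |r| ^ (p - 2) * (1 - |r| ^ 2) := by
    rw [abs_mul, abs_pow, abs_of_nonneg (by linarith : (0:ℝ) ≤ 1 - r ^ 2), sq_abs]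
  rw [heq]
  have hn : 1 ≤ p - 2 := by omega
  have := key_ineq (p - 2) hn |r| (abs_nonneg r) habs
  have hcast : ((p - 2 : ℕ) : ℝ) + 2 = (p : ℝ) := by
    rw [Nat.cast_sub (by omega : 2 ≤ p)]; push_cast; ring
  rwa [hcast] at this
end

section
/- For every integer p ≥ 3, every sign choice ε ∈ {+1, -1}, and every real r with -1 < r < 1, the quantity h(r) := (p-2) + p·r^{2p-2} + ε·(p-2)(p-1)·r^{p-2} - ε·(p-1)p·r^p is strictly positive. -/
/-- AM-GM for the pattern `(t, …, t (m times), c, c)`, in homogeneous form. -/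
lemma amgm_tc (m : ℕ) : ∀ t c : ℝ, 0 ≤ t → 0 ≤ c →
    ((m : ℝ) + 2) ^ (m + 2) * t ^ m * c ^ 2 ≤ ((m : ℝ) * t + 2 * c) ^ (m + 2) := by
  induction m with
  | zero =>
    intro t c ht hc
    norm_num
    nlinarith [sq_nonneg c]
  | succ m ih =>
    intro t c ht hc
    push_cast
    have h1 := ih (((m : ℝ) + 3) * t) (t + ((m : ℝ) + 2) * c) (by positivity) (by positivity)
    rw [mul_pow, show (m : ℝ) * (((m : ℝ) + 3) * t) + 2 * (t + ((m : ℝ) + 2) * c)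
        = ((m : ℝ) + 2) * (((m : ℝ) + 1) * t + 2 * c) by ring, mul_pow] at h1
    have hpos : (0 : ℝ) < ((m : ℝ) + 2) ^ (m + 2) := by positivity
    have h2 : ((m : ℝ) + 3) ^ m * t ^ m * (t + ((m : ℝ) + 2) * c) ^ 2
        ≤ (((m : ℝ) + 1) * t + 2 * c) ^ (m + 2) := by
      apply le_of_mul_le_mul_left _ hpos
      linarith [h1]
    have hstep : ((m : ℝ) + 3) ^ 3 * t * c ^ 2
        ≤ (((m : ℝ) + 1) * t + 2 * c) * (t + ((m : ℝ) + 2) * c) ^ 2 := by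
      have key : (((m : ℝ) + 1) * t + 2 * c) * (t + ((m : ℝ) + 2) * c) ^ 2
          - ((m : ℝ) + 3) ^ 3 * t * c ^ 2
          = (t - c) ^ 2 * (((m : ℝ) + 1) * t + (2 * (m : ℝ) ^ 2 + 8 * (m : ℝ) + 8) * c) := by
        ring
      nlinarith [sq_nonneg (t - c), mul_nonneg (sq_nonneg (t - c))
        (by positivity : (0 : ℝ) ≤ ((m : ℝ) + 1) * t + (2 * (m : ℝ) ^ 2 + 8 * (m : ℝ) + 8) * c)]
    have hbase : (0 : ℝ) ≤ ((m : ℝ) + 1) * t + 2 * c := by positivity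
    calc ((m : ℝ) + 1 + 2) ^ (m + 1 + 2) * t ^ (m + 1) * c ^ 2
        = (((m : ℝ) + 3) ^ m * t ^ m) * (((m : ℝ) + 3) ^ 3 * t * c ^ 2) := by ring
      _ ≤ (((m : ℝ) + 3) ^ m * t ^ m)
            * ((((m : ℝ) + 1) * t + 2 * c) * (t + ((m : ℝ) + 2) * c) ^ 2) := by
          apply mul_le_mul_of_nonneg_left hstep (by positivity)
      _ = (((m : ℝ) + 1) * t + 2 * c)
            * (((m : ℝ) + 3) ^ m * t ^ m * (t + ((m : ℝ) + 2) * c) ^ 2) := by ring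
      _ ≤ (((m : ℝ) + 1) * t + 2 * c) * (((m : ℝ) + 1) * t + 2 * c) ^ (m + 2) := by
          apply mul_le_mul_of_nonneg_left h2 hbase
      _ = (((m : ℝ) + 1) * t + 2 * c) ^ (m + 1 + 2) := by ring

lemma sqrt_le_aux (x y : ℝ) (hx : 0 ≤ x) (hy : 0 ≤ y) (h : x ^ 2 ≤ y ^ 2) : x ≤ y := by
  nlinarith

/-- The core inequality in the variables `s = ε r^(p-2)`, `t = r²`, with `p = n+3`. -/
lemma core_ineq (n : ℕ) (s t : ℝ) (ht0 : 0 ≤ t) (ht1 : t < 1)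
    (hst : s ^ 2 = t ^ (n + 1)) :
    0 < ((n : ℝ) + 1) + ((n : ℝ) + 2) * ((n : ℝ) + 1) * s
      + ((n : ℝ) + 3) * t * s ^ 2 - ((n : ℝ) + 3) * ((n : ℝ) + 2) * t * s := by
  have ha : (0 : ℝ) ≤ (n : ℝ) := Nat.cast_nonneg n
  have hs2 : s ^ 2 < 1 := by
    rw [hst]; exact pow_lt_one₀ ht0 ht1 (Nat.succ_ne_zero n)
  have hslt : s < 1 := by nlinarith
  rcases le_or_gt 0 s with hs | hs
  · -- case s ≥ 0 : use Bernoulli ((n:ℝ)+1)(1-t) ≥ 1 - s²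
    have hber : 1 + ((n : ℝ) + 1) * (t - 1) ≤ t ^ (n + 1) := by
      have h := one_add_mul_le_pow (a := t - 1) (by linarith) (n + 1)
      have e : (1 : ℝ) + (t - 1) = t := by ring
      rw [e] at h
      push_cast at h ⊢
      exact h
    have hb : 1 - s ^ 2 ≤ ((n : ℝ) + 1) * (1 - t) := by
      rw [hst]; nlinarith [hber]
    nlinarith [mul_nonneg (mul_nonneg (by linarith : (0:ℝ) ≤ (n : ℝ) + 3) hs)
        (by linarith : (0:ℝ) ≤ ((n : ℝ) + 1) * (1 - t) - (1 - s ^ 2)),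
      mul_nonneg (mul_nonneg (by linarith : (0:ℝ) ≤ 1 - s) (by linarith : (0:ℝ) ≤ (n : ℝ) + 3))
        (mul_nonneg hs (by linarith : (0:ℝ) ≤ 1 - t)),
      mul_nonneg (mul_nonneg (by linarith : (0:ℝ) ≤ 1 - s) (by linarith : (0:ℝ) ≤ (n : ℝ) + 3))
        (sq_nonneg s),
      mul_pos (by linarith : (0:ℝ) < 1 - s) (by linarith : (0:ℝ) < (n : ℝ) + 1)]
  · -- case s < 0
    rcases le_or_gt ((n : ℝ) + 1) (((n : ℝ) + 3) * t) with hT | hT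
    · nlinarith [mul_nonneg (mul_nonneg (by linarith : (0:ℝ) ≤ (n : ℝ) + 3) ht0) (sq_nonneg s),
        mul_nonneg (mul_nonneg (by linarith : (0:ℝ) ≤ (n : ℝ) + 2) (by linarith : (0:ℝ) ≤ -s))
          (by linarith : (0:ℝ) ≤ ((n : ℝ) + 3) * t - ((n : ℝ) + 1))]
    · -- hard branch : (n+3) t < n+1
      have hDpos : 0 < ((n : ℝ) + 1) - ((n : ℝ) + 3) * t := by linarith
      -- AM-GM step
      have hamgm := amgm_tc (n + 1) (2 * ((n : ℝ) + 3) * t)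
        (((n : ℝ) + 1) * (((n : ℝ) + 1) - ((n : ℝ) + 3) * t)) (by positivity) (by positivity)
      have h3 : ((n : ℝ) + 3) ^ (2 * n + 4)
            * (t ^ (n + 1) * (((n : ℝ) + 1) - ((n : ℝ) + 3) * t) ^ 2)
          ≤ 4 * ((n : ℝ) + 1) ^ (2 * n + 4) := by
        have hpos : (0 : ℝ) < 2 ^ (n + 1) * ((n : ℝ) + 1) ^ 2 := by positivity
        apply le_of_mul_le_mul_left _ hpos
        calc (2 ^ (n + 1) * ((n : ℝ) + 1) ^ 2)
              * (((n : ℝ) + 3) ^ (2 * n + 4)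
                * (t ^ (n + 1) * (((n : ℝ) + 1) - ((n : ℝ) + 3) * t) ^ 2))
            = ((↑(n + 1) : ℝ) + 2) ^ (n + 1 + 2) * (2 * ((n : ℝ) + 3) * t) ^ (n + 1)
              * (((n : ℝ) + 1) * (((n : ℝ) + 1) - ((n : ℝ) + 3) * t)) ^ 2 := by
              rw [mul_pow (2 * ((n : ℝ) + 3)) t (n + 1), mul_pow 2 ((n : ℝ) + 3) (n + 1)]
              push_cast
              ring
          _ ≤ ((↑(n + 1) : ℝ) * (2 * ((n : ℝ) + 3) * t)
                + 2 * (((n : ℝ) + 1) * (((n : ℝ) + 1) - ((n : ℝ) + 3) * t))) ^ (n + 1 + 2) :=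
              hamgm
          _ = (2 * ((n : ℝ) + 1) ^ 2) ^ (n + 1 + 2) := by
              rw [show ((↑(n + 1) : ℝ) * (2 * ((n : ℝ) + 3) * t)
                + 2 * (((n : ℝ) + 1) * (((n : ℝ) + 1) - ((n : ℝ) + 3) * t)))
                = 2 * ((n : ℝ) + 1) ^ 2 by push_cast; ring]
          _ = (2 ^ (n + 1) * ((n : ℝ) + 1) ^ 2) * (4 * ((n : ℝ) + 1) ^ (2 * n + 4)) := by
              rw [mul_pow 2 (((n : ℝ) + 1) ^ 2) (n + 1 + 2), ← pow_mul]
              ring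
      -- Bernoulli : (n+3)^(n+1) ≥ 3 (n+1)^(n+1)
      have h0 : (0 : ℝ) < (n : ℝ) + 1 := by positivity
      have hber2 : 3 * ((n : ℝ) + 1) ^ (n + 1) ≤ ((n : ℝ) + 3) ^ (n + 1) := by
        have h1 := one_add_mul_le_pow (a := 2 / ((n : ℝ) + 1))
          ((by positivity : (0:ℝ) ≤ 2 / ((n : ℝ) + 1)).trans' (by norm_num)) (n + 1)
        have e1 : 1 + (↑(n + 1) : ℝ) * (2 / ((n : ℝ) + 1)) = 3 := by
          have hne : ((n : ℝ) + 1) ≠ 0 := by positivity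
          push_cast
          field_simp
          ring
        have e2 : (1 : ℝ) + 2 / ((n : ℝ) + 1) = ((n : ℝ) + 3) / ((n : ℝ) + 1) := by
          field_simp
          ring
        rw [e1, e2, div_pow] at h1
        rw [le_div_iff₀ (by positivity)] at h1
        linarith
      -- compare
      have hA1pos : (0 : ℝ) < ((n : ℝ) + 1) ^ (n + 2) := by positivity
      have hcomp : 2 * ((n : ℝ) + 2) * ((n : ℝ) + 1) ^ (n + 2)
          < ((n : ℝ) + 1) * ((n : ℝ) + 3) ^ (n + 2) := by
        calc 2 * ((n : ℝ) + 2) * ((n : ℝ) + 1) ^ (n + 2)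
            < 3 * ((n : ℝ) + 3) * ((n : ℝ) + 1) ^ (n + 2) := by nlinarith [hA1pos]
          _ = (((n : ℝ) + 1) * (3 * ((n : ℝ) + 1) ^ (n + 1))) * ((n : ℝ) + 3) := by ring
          _ ≤ (((n : ℝ) + 1) * ((n : ℝ) + 3) ^ (n + 1)) * ((n : ℝ) + 3) := by
              apply mul_le_mul_of_nonneg_right _ (by linarith)
              exact mul_le_mul_of_nonneg_left hber2 (by linarith)
          _ = ((n : ℝ) + 1) * ((n : ℝ) + 3) ^ (n + 2) := by ring
      -- extract the square root
      set E : ℝ := ((n : ℝ) + 2) * (-s) * (((n : ℝ) + 1) - ((n : ℝ) + 3) * t) with hE_def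
      have hE0 : 0 ≤ E := by
        apply mul_nonneg (mul_nonneg (by linarith) (by linarith)) (by linarith)
      have hE2 : (E * ((n : ℝ) + 3) ^ (n + 2)) ^ 2
          ≤ (2 * ((n : ℝ) + 2) * ((n : ℝ) + 1) ^ (n + 2)) ^ 2 := by
        have hEsq : E ^ 2 = ((n : ℝ) + 2) ^ 2
            * (t ^ (n + 1) * (((n : ℝ) + 1) - ((n : ℝ) + 3) * t) ^ 2) := by
          rw [hE_def, ← hst]; ring
        calc (E * ((n : ℝ) + 3) ^ (n + 2)) ^ 2
            = ((n : ℝ) + 2) ^ 2 * (((n : ℝ) + 3) ^ (2 * n + 4)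
                * (t ^ (n + 1) * (((n : ℝ) + 1) - ((n : ℝ) + 3) * t) ^ 2)) := by
              rw [mul_pow E (((n : ℝ) + 3) ^ (n + 2)) 2, hEsq, ← pow_mul]
              ring
          _ ≤ ((n : ℝ) + 2) ^ 2 * (4 * ((n : ℝ) + 1) ^ (2 * n + 4)) :=
              mul_le_mul_of_nonneg_left h3 (sq_nonneg _)
          _ = (2 * ((n : ℝ) + 2) * ((n : ℝ) + 1) ^ (n + 2)) ^ 2 := by
              rw [mul_pow, mul_pow 2 ((n : ℝ) + 2) 2, ← pow_mul]
              ring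
      have hEX : E * ((n : ℝ) + 3) ^ (n + 2) ≤ 2 * ((n : ℝ) + 2) * ((n : ℝ) + 1) ^ (n + 2) :=
        sqrt_le_aux _ _ (mul_nonneg hE0 (by positivity)) (by positivity) hE2
      have hE_lt : E < (n : ℝ) + 1 := by
        have h4 : E * ((n : ℝ) + 3) ^ (n + 2) < ((n : ℝ) + 1) * ((n : ℝ) + 3) ^ (n + 2) :=
          lt_of_le_of_lt hEX hcomp
        exact lt_of_mul_lt_mul_right h4 (by positivity)
      have hgoal : ((n : ℝ) + 1) + ((n : ℝ) + 2) * ((n : ℝ) + 1) * s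
          + ((n : ℝ) + 3) * t * s ^ 2 - ((n : ℝ) + 3) * ((n : ℝ) + 2) * t * s
          = ((n : ℝ) + 1) - E + ((n : ℝ) + 3) * t * s ^ 2 := by
        rw [hE_def]; ring
      rw [hgoal]
      have hlast : 0 ≤ ((n : ℝ) + 3) * t * s ^ 2 := by positivity
      linarith

theorem stmt_1 (p : ℕ) (hp : 3 ≤ p) (ε : ℝ) (hε : ε = 1 ∨ ε = -1)
    (r : ℝ) (hr1 : -1 < r) (hr2 : r < 1) :
    0 < ((p : ℝ) - 2) + p * r ^ (2 * p - 2)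
      + ε * ((p : ℝ) - 2) * ((p : ℝ) - 1) * r ^ (p - 2)
      - ε * ((p : ℝ) - 1) * p * r ^ p := by
  obtain ⟨n, rfl⟩ : ∃ n, p = n + 3 := ⟨p - 3, by omega⟩
  have e1 : 2 * (n + 3) - 2 = 2 * n + 4 := by omega
  have e2 : (n + 3) - 2 = n + 1 := by omega
  rw [e1, e2]
  have ht0 : (0 : ℝ) ≤ r ^ 2 := sq_nonneg r
  have ht1 : r ^ 2 < 1 := by nlinarith
  have hst : (ε * r ^ (n + 1)) ^ 2 = (r ^ 2) ^ (n + 1) := by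
    rcases hε with rfl | rfl <;> ring
  have key := core_ineq n (ε * r ^ (n + 1)) (r ^ 2) ht0 ht1 hst
  refine key.trans_le (le_of_eq ?_)
  rcases hε with rfl | rfl <;> push_cast <;> ring
end

section
/- Let C₁ and C₂ be real symmetric N×N matrices, where C₁ is invertible, and suppose C₂ has at most d nonzero eigenvalues. Denote by λ₁(C₁), …, λ_N(C₁) the eigenvalues of C₁ ordered so that |λ₁(C₁)| ≤ … ≤ |λ_N(C₁)|, and let μ be the maximum absolute value of the eigenvalues of C₂. Then |det(C₁ + C₂)| ≤ |det(C₁)| · ∏_{j=1}^{d} (1 + μ/|λ_j(C₁)|). -/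
/-!
Write `C₂ = E S E` with `E = |C₂|^{1/2}` and `S` the sign of `C₂`, an involution commuting
with `E`. Then `det (C₁ + C₂) = det C₁ · det (S + E C₁⁻¹ E) · det S` and `|det S| = 1`, so it
suffices to bound the symmetric matrix `G = S + E C₁⁻¹ E`. Its `|det|` is the product of the
absolute values of its eigenvalues, and a Courant–Fischer dimension count bounds the
`(j+1)`-st largest of these by any `c` with `‖G x‖ ≤ c ‖x‖` on a subspace of dimension `N - j`.
With `|λ_0(C₁)| ≤ … ≤ |λ_{N-1}(C₁)|`: for `j < d` take the preimage under `E` of the span of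
the eigenvectors of `λ_j(C₁), …, λ_{N-1}(C₁)`, where `‖G x‖ ≤ (1 + μ / |λ_j(C₁)|) ‖x‖`; for
`j ≥ d` take the kernel of `C₂`, on which `G = S` is an isometry.
-/

open Matrix Module Submodule Finset

section FiniteDimensional

variable {K V : Type*} [DivisionRing K] [AddCommGroup V] [Module K V] [FiniteDimensional K V]

theorem Submodule.exists_mem_inf_ne_zero_of_finrank_lt {p q : Submodule K V}
    (h : finrank K V < finrank K p + finrank K q) : ∃ x ∈ p ⊓ q, x ≠ 0 := by
  by_contra! hpq
  exact h.not_ge (finrank_add_finrank_le_of_disjoint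
    (disjoint_def.mpr fun x hp hq => hpq x ⟨hp, hq⟩))

theorem Submodule.finrank_le_finrank_comap (f : V →ₗ[K] V) (W : Submodule K V) :
    finrank K W ≤ finrank K (W.comap f) := by
  have hker : W.comap f = LinearMap.ker (W.mkQ ∘ₗ f) := by
    rw [LinearMap.ker_comp, ker_mkQ]
  have := (W.mkQ ∘ₗ f).finrank_range_add_finrank_ker
  have := (LinearMap.range (W.mkQ ∘ₗ f)).finrank_le
  have := W.finrank_quotient_add_finrank
  rw [hker]
  omega

end FiniteDimensional

section Orthonormal

variable {ι E : Type*} [NormedAddCommGroup E] [InnerProductSpace ℝ E] {w : ι → E}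
  (hw : Orthonormal ℝ w)

include hw in
theorem Orthonormal.finrank_span_image_finset (s : Finset ι) :
    finrank ℝ (span ℝ (w '' s)) = #s := by
  have := finrank_span_eq_card (hw.comp ((↑) : s → ι) Subtype.val_injective).linearIndependent
  rwa [Set.range_comp, Subtype.range_coe_subtype, Finset.setOfPred_mem, Fintype.card_coe] at this

variable {T : E →ₗ[ℝ] E} {ev : ι → ℝ} (hT : ∀ i, T (w i) = ev i • w i) {s : Finset ι} {x : E}
include hw hT

theorem Orthonormal.exists_norm_sq_eq_sum_of_mem_span (hx : x ∈ span ℝ (w '' s)) :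
    ∃ c : ι → ℝ, ‖x‖ ^ 2 = ∑ i ∈ s, c i ^ 2 ∧ ‖T x‖ ^ 2 = ∑ i ∈ s, (ev i * c i) ^ 2 := by
  obtain ⟨c, rfl⟩ := (mem_span_image_finset_iff_exists_fun' ℝ).mp hx
  have hTx : T (∑ i ∈ s, c i • w i) = ∑ i ∈ s, (ev i * c i) • w i := by
    simp [map_sum, hT, smul_smul, mul_comm]
  have hnorm (a : ι → ℝ) : ‖∑ i ∈ s, a i • w i‖ ^ 2 = ∑ i ∈ s, a i ^ 2 := by
    rw [← real_inner_self_eq_norm_sq, hw.inner_sum]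
    simp [sq]
  exact ⟨c, hnorm c, by rw [hTx, hnorm]⟩

theorem Orthonormal.norm_apply_le_of_mem_span {c : ℝ} (hc : 0 ≤ c) (hev : ∀ i ∈ s, |ev i| ≤ c)
    (hx : x ∈ span ℝ (w '' s)) : ‖T x‖ ≤ c * ‖x‖ := by
  obtain ⟨a, hx2, hTx2⟩ := hw.exists_norm_sq_eq_sum_of_mem_span hT hx
  refine (pow_le_pow_iff_left₀ (norm_nonneg _) (by positivity) two_ne_zero).mp ?_
  rw [hTx2, mul_pow, hx2, mul_sum]
  refine sum_le_sum fun i hi => ?_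
  rw [mul_pow, ← sq_abs (ev i)]
  gcongr
  exact hev i hi

theorem Orthonormal.mul_norm_le_norm_apply_of_mem_span {c : ℝ} (hc : 0 ≤ c)
    (hev : ∀ i ∈ s, c ≤ |ev i|) (hx : x ∈ span ℝ (w '' s)) : c * ‖x‖ ≤ ‖T x‖ := by
  obtain ⟨a, hx2, hTx2⟩ := hw.exists_norm_sq_eq_sum_of_mem_span hT hx
  refine (pow_le_pow_iff_left₀ (by positivity) (norm_nonneg _) two_ne_zero).mp ?_
  rw [hTx2, mul_pow, hx2, mul_sum]
  refine sum_le_sum fun i hi => ?_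
  rw [mul_pow, ← sq_abs (ev i)]
  gcongr
  exact hev i hi

theorem Orthonormal.le_of_forall_norm_apply_le [FiniteDimensional ℝ E] {a c : ℝ} (ha : 0 ≤ a)
    (hev : ∀ i ∈ s, a ≤ |ev i|) {W : Submodule ℝ E} (hW : ∀ x ∈ W, ‖T x‖ ≤ c * ‖x‖)
    (hdim : finrank ℝ E < finrank ℝ W + #s) : a ≤ c := by
  rw [← hw.finrank_span_image_finset s] at hdim
  obtain ⟨x, hx, hx0⟩ := exists_mem_inf_ne_zero_of_finrank_lt hdim
  have := (hw.mul_norm_le_norm_apply_of_mem_span hT ha hev hx.2).trans (hW x hx.1)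
  exact le_of_mul_le_mul_right this (norm_pos_iff.mpr hx0)

end Orthonormal

section Determinant

variable {R n : Type*} [CommRing R] [Fintype n] [DecidableEq n] {A E S : Matrix n n R}

theorem Matrix.det_add_mul_mul_eq (hA : IsUnit A.det) (hS : S * S = 1) :
    (A + E * S * E).det = A.det * (S + E * A⁻¹ * E).det * S.det := by
  have hfactor : A + E * S * E = A * (1 + A⁻¹ * E * S * E) := by
    simp only [Matrix.mul_add, Matrix.mul_one, ← Matrix.mul_assoc, mul_nonsing_inv _ hA,
      Matrix.one_mul]
  have hcomm : 1 + E * (A⁻¹ * E * S) = (S + E * A⁻¹ * E) * S := by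
    simp only [Matrix.add_mul, hS, ← Matrix.mul_assoc]
  rw [hfactor, det_mul, det_one_add_mul_comm, hcomm, det_mul, ← mul_assoc]

theorem Matrix.abs_det_eq_one_of_mul_self_eq_one [LinearOrder R] [IsStrictOrderedRing R]
    (hS : S * S = 1) : |S.det| = 1 := by
  have h : |S.det| * |S.det| = 1 := by rw [← abs_mul, ← det_mul, hS, det_one, abs_one]
  exact (mul_self_eq_one_iff.mp h).resolve_right (by linarith [abs_nonneg S.det])

end Determinant

namespace Matrix.IsHermitian

section FunctionalCalculus

variable {𝕜 n : Type*} [RCLike 𝕜] [Fintype n] [DecidableEq n] {A : Matrix n n 𝕜}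
  (hA : A.IsHermitian)

theorem cfc_mul (f g : ℝ → ℝ) : hA.cfc f * hA.cfc g = hA.cfc (f * g) := by
  simp only [Matrix.IsHermitian.cfc, ← map_mul, diagonal_mul_diagonal]
  congr 2
  ext i
  simp

theorem cfc_congr {f g : ℝ → ℝ} (h : ∀ i, f (hA.eigenvalues i) = g (hA.eigenvalues i)) :
    hA.cfc f = hA.cfc g := by
  simp only [Matrix.IsHermitian.cfc, Function.comp_def, h]

theorem cfc_one : hA.cfc 1 = 1 := by
  simp [Matrix.IsHermitian.cfc]

theorem cfc_id : hA.cfc id = A :=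
  hA.spectral_theorem.symm

theorem isHermitian_cfc (f : ℝ → ℝ) : (hA.cfc f).IsHermitian := by
  rw [← cfc_eq hA]
  exact cfc_predicate f A

theorem toEuclideanLin_cfc_eigenvectorBasis (f : ℝ → ℝ) (i : n) :
    toEuclideanLin (hA.cfc f) (hA.eigenvectorBasis i) =
      f (hA.eigenvalues i) • hA.eigenvectorBasis i := by
  ext j
  simp [toLpLin_apply, Matrix.IsHermitian.cfc, star_eigenvectorUnitary_mulVec]

theorem toEuclideanLin_eigenvectorBasis (i : n) :
    toEuclideanLin A (hA.eigenvectorBasis i) = hA.eigenvalues i • hA.eigenvectorBasis i := by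
  simpa [hA.cfc_id] using hA.toEuclideanLin_cfc_eigenvectorBasis id i

theorem eigenvalues_ne_zero (hdet : IsUnit A.det) (i : n) : hA.eigenvalues i ≠ 0 := by
  have := hdet.ne_zero
  rw [hA.det_eq_prod_eigenvalues, prod_ne_zero_iff] at this
  exact_mod_cast this i (mem_univ i)

theorem inv_eq_cfc (hdet : IsUnit A.det) : A⁻¹ = hA.cfc (·⁻¹) := by
  refine inv_eq_left_inv ?_
  calc hA.cfc (·⁻¹) * A = hA.cfc ((·⁻¹) * id) := by rw [← hA.cfc_mul, hA.cfc_id]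
    _ = hA.cfc 1 := hA.cfc_congr fun i => inv_mul_cancel₀ (hA.eigenvalues_ne_zero hdet i)
    _ = 1 := hA.cfc_one

noncomputable def sqrtAbs : Matrix n n 𝕜 :=
  hA.cfc fun x => √|x|

/-- The sign of a Hermitian matrix, with the sign of `0` taken to be `1` so that it is an
involution. -/
noncomputable def sign : Matrix n n 𝕜 :=
  hA.cfc fun x => if x < 0 then -1 else 1

theorem isHermitian_sqrtAbs : hA.sqrtAbs.IsHermitian :=
  hA.isHermitian_cfc _

theorem isHermitian_sign : hA.sign.IsHermitian :=
  hA.isHermitian_cfc _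

theorem sign_mul_self : hA.sign * hA.sign = 1 := by
  rw [sign, hA.cfc_mul, ← hA.cfc_one]
  refine hA.cfc_congr fun i => ?_
  simp only [Pi.mul_apply, Pi.one_apply]
  split_ifs <;> norm_num

theorem sqrtAbs_mul_sign_mul_sqrtAbs : hA.sqrtAbs * hA.sign * hA.sqrtAbs = A := by
  rw [sqrtAbs, sign, hA.cfc_mul, hA.cfc_mul]
  conv_rhs => rw [← hA.cfc_id]
  refine hA.cfc_congr fun i => ?_
  have hsq := Real.mul_self_sqrt (abs_nonneg (hA.eigenvalues i))
  simp only [Pi.mul_apply, id]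
  split_ifs with hneg
  · rw [abs_of_neg hneg] at hsq ⊢
    linarith
  · rw [abs_of_nonneg (not_lt.mp hneg)] at hsq ⊢
    linarith

end FunctionalCalculus

section Norms

variable {n : Type*} [Fintype n] [DecidableEq n] {A : Matrix n n ℝ} (hA : A.IsHermitian)

theorem norm_toEuclideanLin_cfc_le_of_mem_span {f : ℝ → ℝ} {s : Finset n} {c : ℝ} (hc : 0 ≤ c)
    (hf : ∀ i ∈ s, |f (hA.eigenvalues i)| ≤ c) {x : EuclideanSpace ℝ n}
    (hx : x ∈ span ℝ (hA.eigenvectorBasis '' s)) :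
    ‖toEuclideanLin (hA.cfc f) x‖ ≤ c * ‖x‖ :=
  hA.eigenvectorBasis.orthonormal.norm_apply_le_of_mem_span
    (hA.toEuclideanLin_cfc_eigenvectorBasis f) hc hf hx

theorem norm_toEuclideanLin_cfc_le {f : ℝ → ℝ} {c : ℝ} (hc : 0 ≤ c)
    (hf : ∀ i, |f (hA.eigenvalues i)| ≤ c) (x : EuclideanSpace ℝ n) :
    ‖toEuclideanLin (hA.cfc f) x‖ ≤ c * ‖x‖ :=
  hA.norm_toEuclideanLin_cfc_le_of_mem_span (s := univ) hc (fun i _ => hf i)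
    (by simpa using hA.eigenvectorBasis.toBasis.mem_span x)

theorem norm_toEuclideanLin_sign_le (x : EuclideanSpace ℝ n) :
    ‖toEuclideanLin hA.sign x‖ ≤ ‖x‖ := by
  have := hA.norm_toEuclideanLin_cfc_le (f := fun x => if x < 0 then -1 else 1) zero_le_one
    (fun i => by split_ifs <;> simp) x
  rwa [one_mul] at this

theorem norm_toEuclideanLin_sqrtAbs_le {μ : ℝ} (hμ : ∀ i, |hA.eigenvalues i| ≤ μ)
    (x : EuclideanSpace ℝ n) : ‖toEuclideanLin hA.sqrtAbs x‖ ≤ √μ * ‖x‖ :=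
  hA.norm_toEuclideanLin_cfc_le (Real.sqrt_nonneg μ)
    (fun i => by rw [abs_of_nonneg (Real.sqrt_nonneg _)]; exact Real.sqrt_le_sqrt (hμ i)) x

theorem toEuclideanLin_sqrtAbs_eq_zero {x : EuclideanSpace ℝ n}
    (hx : x ∈ span ℝ (hA.eigenvectorBasis '' ↑(univ.filter fun i => hA.eigenvalues i = 0))) :
    toEuclideanLin hA.sqrtAbs x = 0 := by
  have := hA.norm_toEuclideanLin_cfc_le_of_mem_span (f := fun x => √|x|) le_rfl
    (fun i hi => by simp [(mem_filter.mp hi).2]) hx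
  rwa [zero_mul, norm_le_zero_iff] at this

end Norms

theorem abs_det_le_prod {n : ℕ} {G : Matrix (Fin n) (Fin n) ℝ} (hG : G.IsHermitian)
    (b : Fin n → ℝ)
    (hb : ∀ j : Fin n, ∃ W : Submodule ℝ (EuclideanSpace ℝ (Fin n)),
      n - j ≤ finrank ℝ W ∧ ∀ x ∈ W, ‖toEuclideanLin G x‖ ≤ b j * ‖x‖) :
    |G.det| ≤ ∏ j, b j := by
  set φ := Fin.revPerm.trans (Tuple.sort fun i => |hG.eigenvalues i|)
  have hφ : Antitone fun j => |hG.eigenvalues (φ j)| :=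
    fun _ _ hij => Tuple.monotone_sort (fun i => |hG.eigenvalues i|) (Fin.rev_anti hij)
  have hev (j : Fin n) : |hG.eigenvalues (φ j)| ≤ b j := by
    obtain ⟨W, hWdim, hW⟩ := hb j
    refine hG.eigenvectorBasis.orthonormal.le_of_forall_norm_apply_le
      hG.toEuclideanLin_eigenvectorBasis (s := (Iic j).image φ) (abs_nonneg _) ?_ hW ?_
    · simpa using fun k hk => hφ hk
    · rw [finrank_euclideanSpace_fin, card_image_of_injective _ φ.injective, Fin.card_Iic]
      omega
  calc |G.det| = ∏ j, |hG.eigenvalues (φ j)| := by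
        rw [hG.det_eq_prod_eigenvalues, abs_prod, ← φ.prod_comp]
        simp
    _ ≤ ∏ j, b j := prod_le_prod (fun _ _ => abs_nonneg _) fun j _ => hev j

section Perturbation

variable {n : Type*} [Fintype n] [DecidableEq n] {C₂ : Matrix n n ℝ} (h2 : C₂.IsHermitian)

theorem toEuclideanLin_sign_add_apply (B : Matrix n n ℝ) (x : EuclideanSpace ℝ n) :
    toEuclideanLin (h2.sign + h2.sqrtAbs * B * h2.sqrtAbs) x =
      toEuclideanLin h2.sign x +
        toEuclideanLin h2.sqrtAbs (toEuclideanLin B (toEuclideanLin h2.sqrtAbs x)) := by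
  simp [toLpLin_mul_same]

theorem isHermitian_sign_add {B : Matrix n n ℝ} (hB : B.IsHermitian) :
    (h2.sign + h2.sqrtAbs * B * h2.sqrtAbs).IsHermitian := by
  refine h2.isHermitian_sign.add ?_
  simpa only [h2.isHermitian_sqrtAbs.eq] using isHermitian_mul_mul_conjTranspose h2.sqrtAbs hB

theorem exists_finrank_norm_sign_add_le (B : Matrix n n ℝ) :
    ∃ W : Submodule ℝ (EuclideanSpace ℝ n),
      Fintype.card n - #(univ.filter fun i => h2.eigenvalues i ≠ 0) ≤ finrank ℝ W ∧
      ∀ x ∈ W, ‖toEuclideanLin (h2.sign + h2.sqrtAbs * B * h2.sqrtAbs) x‖ ≤ ‖x‖ := by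
  refine ⟨span ℝ (h2.eigenvectorBasis '' ↑(univ.filter fun i => h2.eigenvalues i = 0)), ?_,
    fun x hx => ?_⟩
  · have hsplit := card_filter_add_card_filter_not (s := univ) fun i => h2.eigenvalues i = 0
    simp only [← ne_eq, card_univ] at hsplit
    rw [h2.eigenvectorBasis.orthonormal.finrank_span_image_finset]
    omega
  · rw [h2.toEuclideanLin_sign_add_apply, h2.toEuclideanLin_sqrtAbs_eq_zero hx, map_zero,
      map_zero, add_zero]
    exact h2.norm_toEuclideanLin_sign_le x

end Perturbation

theorem exists_finrank_norm_sign_add_inv_le {N : ℕ} {C₁ C₂ : Matrix (Fin N) (Fin N) ℝ}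
    (h1 : C₁.IsHermitian) (h2 : C₂.IsHermitian) (hinv : IsUnit C₁.det)
    {σ : Equiv.Perm (Fin N)} (hσ : Monotone fun j => |h1.eigenvalues (σ j)|) {μ : ℝ}
    (hμ : ∀ i, |h2.eigenvalues i| ≤ μ) (j : Fin N) :
    ∃ W : Submodule ℝ (EuclideanSpace ℝ (Fin N)), N - j ≤ finrank ℝ W ∧
      ∀ x ∈ W, ‖toEuclideanLin (h2.sign + h2.sqrtAbs * C₁⁻¹ * h2.sqrtAbs) x‖ ≤
        (1 + μ / |h1.eigenvalues (σ j)|) * ‖x‖ := by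
  set U := span ℝ (h1.eigenvectorBasis '' ((Ici j).image σ))
  refine ⟨U.comap (toEuclideanLin h2.sqrtAbs), ?_, fun x hx => ?_⟩
  · calc N - j = finrank ℝ U := by
          rw [h1.eigenvectorBasis.orthonormal.finrank_span_image_finset,
            card_image_of_injective _ σ.injective, Fin.card_Ici]
      _ ≤ _ := finrank_le_finrank_comap _ _
  have hμ0 : 0 ≤ μ := (abs_nonneg _).trans (hμ j)
  have hpos : 0 < |h1.eigenvalues (σ j)| := abs_pos.mpr (h1.eigenvalues_ne_zero hinv _)
  set y := toEuclideanLin h2.sqrtAbs x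
  have hinv_y : ‖toEuclideanLin C₁⁻¹ y‖ ≤ |h1.eigenvalues (σ j)|⁻¹ * ‖y‖ := by
    rw [h1.inv_eq_cfc hinv]
    refine h1.norm_toEuclideanLin_cfc_le_of_mem_span (inv_nonneg.mpr hpos.le) ?_ hx
    simp only [mem_image, mem_Ici, forall_exists_index, and_imp, forall_apply_eq_imp_iff₂]
    intro k hk
    rw [abs_inv]
    exact inv_anti₀ hpos (hσ hk)
  calc ‖toEuclideanLin (h2.sign + h2.sqrtAbs * C₁⁻¹ * h2.sqrtAbs) x‖
      ≤ ‖x‖ + √μ * (|h1.eigenvalues (σ j)|⁻¹ * (√μ * ‖x‖)) := by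
        rw [h2.toEuclideanLin_sign_add_apply]
        refine (norm_add_le _ _).trans (add_le_add (h2.norm_toEuclideanLin_sign_le x) ?_)
        refine (h2.norm_toEuclideanLin_sqrtAbs_le hμ _).trans ?_
        gcongr
        exact hinv_y.trans (by gcongr; exact h2.norm_toEuclideanLin_sqrtAbs_le hμ x)
    _ = (1 + μ / |h1.eigenvalues (σ j)|) * ‖x‖ := by
        rw [div_eq_mul_inv]
        linear_combination (|h1.eigenvalues (σ j)|⁻¹ * ‖x‖) * Real.mul_self_sqrt hμ0

end Matrix.IsHermitian

open Finset in
theorem stmt_4_general (N : ℕ) (hN : 0 < N) (C₁ C₂ : Matrix (Fin N) (Fin N) ℝ)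
    (h1 : C₁.IsHermitian) (h2 : C₂.IsHermitian) (hinv : IsUnit C₁.det)
    (σ : Equiv.Perm (Fin N))
    (hσ : Monotone fun j => |h1.eigenvalues (σ j)|)
    (d : ℕ)
    (hcount : (Finset.univ.filter fun j => h2.eigenvalues j ≠ 0).card ≤ d)
    (μ : ℝ)
    (hμ : μ = Finset.univ.sup' (Finset.univ_nonempty_iff.mpr (Fin.pos_iff_nonempty.mp hN)) fun j => |h2.eigenvalues j|) :
    |(C₁ + C₂).det| ≤ |C₁.det| *
      ∏ j ∈ Finset.univ.filter (fun j : Fin N => (j : ℕ) < d),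
        (1 + μ / |h1.eigenvalues (σ j)|) := by
  have hμ_ge (i : Fin N) : |h2.eigenvalues i| ≤ μ :=
    hμ ▸ le_sup' (fun j => |h2.eigenvalues j|) (mem_univ i)
  have hdet := (h2.isHermitian_sign_add h1.inv).abs_det_le_prod
    (fun j => if (j : ℕ) < d then 1 + μ / |h1.eigenvalues (σ j)| else 1) fun j => by
      split_ifs
      · exact h1.exists_finrank_norm_sign_add_inv_le h2 hinv hσ hμ_ge j
      · obtain ⟨W, hW, hWx⟩ := h2.exists_finrank_norm_sign_add_le C₁⁻¹
        rw [Fintype.card_fin] at hW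
        exact ⟨W, by omega, by simpa using hWx⟩
  conv_lhs => rw [← h2.sqrtAbs_mul_sign_mul_sqrtAbs]
  rw [det_add_mul_mul_eq hinv h2.sign_mul_self, abs_mul, abs_mul,
    abs_det_eq_one_of_mul_self_eq_one h2.sign_mul_self, mul_one, prod_filter]
  exact mul_le_mul_of_nonneg_left hdet (abs_nonneg _)

open Finset in
theorem stmt_4 (N : ℕ) (hN : 0 < N) (C₁ C₂ : Matrix (Fin N) (Fin N) ℝ)
    (h1 : C₁.IsHermitian) (h2 : C₂.IsHermitian) (hinv : IsUnit C₁.det)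
    (σ : Equiv.Perm (Fin N))
    (hσ : Monotone fun j => |h1.eigenvalues (σ j)|)
    (d : ℕ) (hd : d ≤ N)
    (hcount : (Finset.univ.filter fun j => h2.eigenvalues j ≠ 0).card ≤ d)
    (μ : ℝ)
    (hμ : μ = Finset.univ.sup' (Finset.univ_nonempty_iff.mpr (Fin.pos_iff_nonempty.mp hN)) fun j => |h2.eigenvalues j|) :
    |(C₁ + C₂).det| ≤ |C₁.det| *
      ∏ j ∈ Finset.univ.filter (fun j : Fin N => (j : ℕ) < d),
        (1 + μ / |h1.eigenvalues (σ j)|) :=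
  stmt_4_general N hN C₁ C₂ h1 h2 hinv σ hσ d hcount μ hμ
end

section
/- For an integer p ≥ 3 with Θ_p defined as above, Θ_p is nondecreasing on ℝ and Θ_p(0) = (1/2)·log(p-1) > 0. -/
open Real Set

/-!
On `u < -E` one computes `J' u = -2 √(u² - E²) / E²`, so `J` is antitone on `Iic (-E)` and the
first branch of `Θ` is the sum of two functions that are monotone there; the middle branch is
monotone because `u ≤ 0`, the last one is constant, and the branches agree at the break points
because `J (-E) = 0`.
-/

theorem monotone_ite_le_ite_le {α β : Type*} [LinearOrder α] [Preorder β] {f g h : α → β}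
    {a b : α} (hab : a ≤ b) (hf : MonotoneOn f (Iic a)) (hg : MonotoneOn g (Icc a b))
    (hh : MonotoneOn h (Ici b)) (hfg : f a = g a) (hgh : g b = h b) :
    Monotone fun x => if x ≤ a then f x else if x ≤ b then g x else h x := by
  set F : α → β := fun x => if x ≤ a then f x else if x ≤ b then g x else h x
  have hF₁ : EqOn F f (Iic a) := fun x hx => if_pos hx
  have hF₂ : EqOn F g (Icc a b) := by
    intro x ⟨hax, hxb⟩
    rcases hax.eq_or_lt with rfl | hax
    · exact (if_pos le_rfl).trans hfg
    · exact (if_neg hax.not_ge).trans (if_pos hxb)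
  have hF₃ : EqOn F h (Ici b) := by
    intro x hbx
    rcases (mem_Ici.1 hbx).eq_or_lt with rfl | hbx
    · exact (hF₂ ⟨hab, le_rfl⟩).trans hgh
    · exact (if_neg (hab.trans_lt hbx).not_ge).trans (if_neg hbx.not_ge)
  have hIic : MonotoneOn F (Iic b) := by
    rw [← Iic_union_Icc_eq_Iic hab]
    exact (hf.congr hF₁.symm).union_right (hg.congr hF₂.symm) isGreatest_Iic
      (isLeast_Icc hab)
  rw [← monotoneOn_univ, ← Iic_union_Ici (a := b)]
  exact hIic.union_right (hh.congr hF₃.symm) isGreatest_Iic isLeast_Ici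

noncomputable def correctionJ (E u : ℝ) : ℝ :=
  -(u / E ^ 2) * √(u ^ 2 - E ^ 2) - log (-u + √(u ^ 2 - E ^ 2)) + log E

theorem correctionJ_neg_self (E : ℝ) : correctionJ E (-E) = 0 := by
  simp [correctionJ]

theorem neg_add_sqrt_sq_sub_sq_pos {E u : ℝ} (hE : 0 < E) (hu : u ≤ -E) :
    0 < -u + √(u ^ 2 - E ^ 2) := by
  have := sqrt_nonneg (u ^ 2 - E ^ 2)
  linarith

theorem continuousOn_correctionJ {E : ℝ} (hE : 0 < E) :
    ContinuousOn (correctionJ E) (Iic (-E)) := by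
  have hsqrt : Continuous fun x : ℝ => √(x ^ 2 - E ^ 2) := by fun_prop
  refine ContinuousOn.add (ContinuousOn.sub ?_ ?_) continuousOn_const
  · exact (((continuous_id.div_const _).neg).mul hsqrt).continuousOn
  · exact (continuous_neg.add hsqrt).continuousOn.log fun _ hx =>
      (neg_add_sqrt_sq_sub_sq_pos hE hx).ne'

theorem hasDerivAt_correctionJ {E u : ℝ} (hE : 0 < E) (hu : u < -E) :
    HasDerivAt (correctionJ E) (-2 * √(u ^ 2 - E ^ 2) / E ^ 2) u := by
  have hdisc : 0 < u ^ 2 - E ^ 2 := by nlinarith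
  set v := √(u ^ 2 - E ^ 2)
  have hv : 0 < v := sqrt_pos.2 hdisc
  have hv2 : v ^ 2 = u ^ 2 - E ^ 2 := sq_sqrt hdisc.le
  have harg : 0 < -u + v := neg_add_sqrt_sq_sub_sq_pos hE hu.le
  have hsqrt : HasDerivAt (fun x => √(x ^ 2 - E ^ 2)) (2 * u / (2 * v)) u := by
    simpa using ((hasDerivAt_pow 2 u).sub_const (E ^ 2)).sqrt hdisc.ne'
  have hJ : HasDerivAt (correctionJ E) (-(1 / E ^ 2) * v + -(u / E ^ 2) * (2 * u / (2 * v))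
      - (-1 + 2 * u / (2 * v)) / (-u + v)) u :=
    ((((hasDerivAt_id' u).div_const (E ^ 2)).neg.mul hsqrt).sub
      (((hasDerivAt_id' u).neg.add hsqrt).log harg.ne')).add_const (log E)
  convert hJ using 1
  field_simp
  linear_combination (u - v) * hv2

theorem antitoneOn_correctionJ {E : ℝ} (hE : 0 < E) :
    AntitoneOn (correctionJ E) (Iic (-E)) := by
  refine antitoneOn_of_deriv_nonpos (convex_Iic _) (continuousOn_correctionJ hE) ?_ ?_ <;>
    intro x hx <;> rw [interior_Iic] at hx
  · exact (hasDerivAt_correctionJ hE hx).differentiableAt.differentiableWithinAt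
  · rw [(hasDerivAt_correctionJ hE hx).deriv]
    have := sqrt_nonneg (x ^ 2 - E ^ 2)
    exact div_nonpos_of_nonpos_of_nonneg (by linarith) (sq_nonneg E)

theorem monotoneOn_const_sub_mul_sq (c : ℝ) {a : ℝ} (ha : 0 ≤ a) :
    MonotoneOn (fun u => c - a * u ^ 2) (Iic 0) := fun x _ y hy hxy => by
  have : y ^ 2 ≤ x ^ 2 := by nlinarith [mem_Iic.1 hy]
  have := mul_le_mul_of_nonneg_left this ha
  simp only
  linarith

theorem monotoneOn_const_sub_mul_sq_sub_correctionJ (c : ℝ) {a E : ℝ} (ha : 0 ≤ a)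
    (hE : 0 < E) : MonotoneOn (fun u => c - a * u ^ 2 - correctionJ E u) (Iic (-E)) :=
  fun x hx y hy hxy => by
    have hsq := monotoneOn_const_sub_mul_sq c ha (Iic_subset_Iic.2 (neg_nonpos.2 hE.le) hx)
      (Iic_subset_Iic.2 (neg_nonpos.2 hE.le) hy) hxy
    have hJ := antitoneOn_correctionJ hE hx hy hxy
    simp only at hsq ⊢
    linarith

theorem stmt_14 (p : ℕ) (hp : 3 ≤ p) :
    let Einf : ℝ := 2 * Real.sqrt (((p : ℝ) - 1) / p)
    let J : ℝ → ℝ := fun u =>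
      -(u / Einf ^ 2) * Real.sqrt (u ^ 2 - Einf ^ 2)
        - Real.log (-u + Real.sqrt (u ^ 2 - Einf ^ 2)) + Real.log Einf
    let Θ : ℝ → ℝ := fun u =>
      if u ≤ -Einf then
        (1 / 2) * Real.log ((p : ℝ) - 1) - (((p : ℝ) - 2) / (4 * ((p : ℝ) - 1))) * u ^ 2 - J u
      else if u ≤ 0 then
        (1 / 2) * Real.log ((p : ℝ) - 1) - (((p : ℝ) - 2) / (4 * ((p : ℝ) - 1))) * u ^ 2
      else (1 / 2) * Real.log ((p : ℝ) - 1)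
    Monotone Θ ∧ Θ 0 = (1 / 2) * Real.log ((p : ℝ) - 1) ∧ 0 < Θ 0 := by
  intro Einf J Θ
  have hp' : (3 : ℝ) ≤ p := by exact_mod_cast hp
  have hE : 0 < Einf := mul_pos two_pos (sqrt_pos.2 (div_pos (by linarith) (by linarith)))
  have ha : 0 ≤ ((p : ℝ) - 2) / (4 * ((p : ℝ) - 1)) := div_nonneg (by linarith) (by linarith)
  have hΘ0 : Θ 0 = (1 / 2) * log ((p : ℝ) - 1) := by simp [Θ, hE]
  refine ⟨monotone_ite_le_ite_le (neg_nonpos.2 hE.le)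
    (monotoneOn_const_sub_mul_sq_sub_correctionJ _ ha hE)
    ((monotoneOn_const_sub_mul_sq _ ha).mono Icc_subset_Iic_self) monotoneOn_const
    (sub_eq_self.2 (correctionJ_neg_self Einf)) (by simp), hΘ0, ?_⟩
  rw [hΘ0]
  have := log_pos (by linarith : (1 : ℝ) < p - 1)
  positivity
end

section
/- Let p ≥ 3 be an integer, let Σ_U(r) = -(1/p)·[[b₁(r), b₂(r)],[b₂(r), b₁(r)]] where b₁(r) = -p + a₂(r)·p³·r^{2p-2}·(1-r²), b₂(r) = -p·r^p - a₄(r)·p³·r^{2p-2}·(1-r²), a₂(r) = 1/(p·(1-(r^p-(p-1)·r^{p-2}·(1-r²))²)), and a₄(r) = (-r^p + (p-1)r^{p-2}(1-r²))/(p(1-(r^p-(p-1)r^{p-2}(1-r²))²)). Then for every r ∈ (-1,1), the eigenvalues of Σ_U(r), namely Σ_{U,11}(r) ± Σ_{U,12}(r), equal (1 - r^{2p-2} ± (p-1)·r^{p-2}·(1-r²)) / (1 ∓ (p·r^p - (p-1)·r^{p-2})). -/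
theorem stmt_15 (p : ℕ) (hp : 3 ≤ p) (r : ℝ) (hr1 : -1 < r) (hr2 : r < 1)
    (hden : 1 - (r ^ p - ((p : ℝ) - 1) * r ^ (p - 2) * (1 - r ^ 2)) ^ 2 ≠ 0)
    (hm : 1 - ((p : ℝ) * r ^ p - ((p : ℝ) - 1) * r ^ (p - 2)) ≠ 0)
    (hpl : 1 + ((p : ℝ) * r ^ p - ((p : ℝ) - 1) * r ^ (p - 2)) ≠ 0) :
    let a₂ : ℝ := 1 / ((p : ℝ) * (1 - (r ^ p - ((p : ℝ) - 1) * r ^ (p - 2) * (1 - r ^ 2)) ^ 2))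
    let a₄ : ℝ := (-r ^ p + ((p : ℝ) - 1) * r ^ (p - 2) * (1 - r ^ 2)) /
      ((p : ℝ) * (1 - (r ^ p - ((p : ℝ) - 1) * r ^ (p - 2) * (1 - r ^ 2)) ^ 2))
    let b₁ : ℝ := -(p : ℝ) + a₂ * (p : ℝ) ^ 3 * r ^ (2 * p - 2) * (1 - r ^ 2)
    let b₂ : ℝ := -(p : ℝ) * r ^ p - a₄ * (p : ℝ) ^ 3 * r ^ (2 * p - 2) * (1 - r ^ 2)
    let S11 : ℝ := -b₁ / p
    let S12 : ℝ := -b₂ / p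
    S11 + S12 = (1 - r ^ (2 * p - 2) + ((p : ℝ) - 1) * r ^ (p - 2) * (1 - r ^ 2)) /
        (1 - ((p : ℝ) * r ^ p - ((p : ℝ) - 1) * r ^ (p - 2))) ∧
    S11 - S12 = (1 - r ^ (2 * p - 2) - ((p : ℝ) - 1) * r ^ (p - 2) * (1 - r ^ 2)) /
        (1 + ((p : ℝ) * r ^ p - ((p : ℝ) - 1) * r ^ (p - 2))) := by
  obtain ⟨n, rfl⟩ : ∃ n, p = n + 3 := ⟨p - 3, by omega⟩
  have e1 : n + 3 - 2 = n + 1 := by omega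
  have e2 : 2 * (n + 3) - 2 = 2 * n + 4 := by omega
  simp only [e1, e2] at *
  push_cast at *
  have hp0 : ((n : ℝ) + 3) ≠ 0 := by positivity
  constructor <;>
  · field_simp
    ring
end

section
/- For every integer p ≥ 3 and every r ∈ (-1,1), both eigenvalues Σ_{U,11}(r) ± Σ_{U,12}(r) = (1 - r^{2p-2} ± (p-1)·r^{p-2}·(1-r²))/(1 ∓ (p·r^p - (p-1)·r^{p-2})) of the covariance matrix Σ_U(r) are strictly less than 2(p-1)/p. -/
open Finset

lemma aux_pairing (n : ℕ) (t : ℝ) (h0 : 0 ≤ t) :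
    ((n:ℝ)+1) * t^n ≤ ∑ k ∈ range (n+1), (t^2)^k := by
  have hrefl : ∑ k ∈ range (n+1), (t^2)^(n-k) = ∑ k ∈ range (n+1), (t^2)^k := by
    have := Finset.sum_range_reflect (fun k => (t^2)^k) (n+1)
    simpa using this
  have hnn : (0:ℝ) ≤ ∑ k ∈ range (n+1), (t^k - t^(n-k))^2 :=
    Finset.sum_nonneg fun k _ => sq_nonneg _
  have hexp : ∑ k ∈ range (n+1), (t^k - t^(n-k))^2
      = 2 * (∑ k ∈ range (n+1), (t^2)^k) - 2*((n:ℝ)+1)*t^n := by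
    have h1 : ∀ k ∈ range (n+1),
        (t^k - t^(n-k))^2 = (t^2)^k + (t^2)^(n-k) - 2*t^n := by
      intro k hk
      have hk' : k + (n - k) = n := by
        have := Finset.mem_range.mp hk; omega
      have ht : t^k * t^(n-k) = t^n := by rw [← pow_add, hk']
      linear_combination (-2:ℝ) * ht
    rw [Finset.sum_congr rfl h1, Finset.sum_sub_distrib, Finset.sum_add_distrib, hrefl,
      Finset.sum_const, card_range]
    push_cast
    ring
  linarith

lemma aux_Hminus (n : ℕ) (hn : 1 ≤ n) (t : ℝ) (h0 : 0 ≤ t) (h1 : t < 1) :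
    0 < (n:ℝ) + ((n:ℝ)+2)*t^(2*n+2) - ((n:ℝ)+1)*t^n*((n:ℝ) - ((n:ℝ)+2)*t^2) := by
  rcases eq_or_lt_of_le h0 with h | h
  · rw [← h]
    rw [zero_pow (by omega : 2*n+2 ≠ 0), zero_pow (by omega : n ≠ 0)]
    have : (0:ℝ) < n := by exact_mod_cast hn
    nlinarith
  · have hsum := aux_pairing n t h0
    have hgeo : (1 - t^2) * ∑ k ∈ range (n+1), (t^2)^k = 1 - (t^2)^(n+1) := by
      linear_combination (-1 : ℝ) * geom_sum_mul (t^2) (n+1)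
    have ht2 : (0:ℝ) ≤ 1 - t^2 := by nlinarith
    have step : ((n:ℝ)+1)*t^n*(1 - t^2) ≤ 1 - t^(2*n+2) := by
      have h := mul_le_mul_of_nonneg_left hsum ht2
      rw [hgeo, show (t^2)^(n+1) = t^(2*n+2) from by ring] at h
      linarith
    have hq : (0:ℝ) ≤ ((n:ℝ)+1)*t^n*t^2 := by positivity
    have hn0 : (0:ℝ) ≤ (n:ℝ) := by positivity
    have stepn := mul_le_mul_of_nonneg_left step hn0
    have hT : (0:ℝ) < t^(2*n+2) := pow_pos h _
    nlinarith [stepn, hq, hT]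

lemma aux_Hplus (n : ℕ) (hn : 1 ≤ n) (t : ℝ) (h0 : 0 ≤ t) (h1 : t < 1) :
    0 < (n:ℝ) + ((n:ℝ)+2)*t^(2*n+2) + ((n:ℝ)+1)*t^n*((n:ℝ) - ((n:ℝ)+2)*t^2) := by
  set A := ∑ k ∈ range n, t^k with hAdef
  set B := ∑ k ∈ range n, t^(n+2+k) with hBdef
  have hA : (1-t)*A = 1 - t^n := by
    linear_combination (-1 : ℝ) * geom_sum_mul t n
  have hBA : B = t^(n+2) * A := by
    rw [hAdef, hBdef, Finset.mul_sum]
    exact Finset.sum_congr rfl fun k _ => by rw [← pow_add]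
  have hB : (1-t)*B = t^(n+2) - t^(2*n+2) := by
    rw [hBA]
    linear_combination (t^(n+2)) * hA
  have hA1 : (1:ℝ) ≤ A := by
    have := Finset.single_le_sum (f := fun k => t^k)
      (fun i _ => pow_nonneg h0 i) (Finset.mem_range.mpr (by omega : 0 < n))
    simpa using this
  have hBle : B ≤ (n:ℝ) * t^(n+1) := by
    calc B ≤ ∑ _k ∈ range n, t^(n+1) :=
          Finset.sum_le_sum fun k _ => pow_le_pow_of_le_one h0 h1.le (by omega)
      _ = (n:ℝ) * t^(n+1) := by rw [Finset.sum_const, card_range, nsmul_eq_mul]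
  have htn : (0:ℝ) ≤ t^n := pow_nonneg h0 n
  have hn0 : (1:ℝ) ≤ (n:ℝ) := by exact_mod_cast hn
  have hGpos : (n:ℝ) ≤ (n:ℝ)*A + ((n:ℝ)+2)*(n:ℝ)*(t^n+t^(n+1)) - ((n:ℝ)+2)*B := by
    nlinarith [mul_le_mul_of_nonneg_left hBle (show (0:ℝ) ≤ (n:ℝ)+2 by linarith),
      mul_le_mul_of_nonneg_left hA1 (show (0:ℝ) ≤ (n:ℝ) by linarith),
      mul_nonneg (show (0:ℝ) ≤ ((n:ℝ)+2)*(n:ℝ) by nlinarith) htn]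
  have hfact : (n:ℝ) + ((n:ℝ)+2)*t^(2*n+2) + ((n:ℝ)+1)*t^n*((n:ℝ) - ((n:ℝ)+2)*t^2)
      = (1-t) * ((n:ℝ)*A + ((n:ℝ)+2)*(n:ℝ)*(t^n+t^(n+1)) - ((n:ℝ)+2)*B) := by
    linear_combination (-(n:ℝ))*hA + ((n:ℝ)+2)*hB
  rw [hfact]
  have h1t : (0:ℝ) < 1 - t := by linarith
  have : (0:ℝ) < (n:ℝ)*A + ((n:ℝ)+2)*(n:ℝ)*(t^n+t^(n+1)) - ((n:ℝ)+2)*B := by linarith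
  exact mul_pos h1t this

theorem stmt_16 (p : ℕ) (hp : 3 ≤ p) (r : ℝ) (hr1 : -1 < r) (hr2 : r < 1)
    (hm : 0 < 1 - ((p : ℝ) * r ^ p - ((p : ℝ) - 1) * r ^ (p - 2)))
    (hpl : 0 < 1 + ((p : ℝ) * r ^ p - ((p : ℝ) - 1) * r ^ (p - 2))) :
    (1 - r ^ (2 * p - 2) + ((p : ℝ) - 1) * r ^ (p - 2) * (1 - r ^ 2)) /
        (1 - ((p : ℝ) * r ^ p - ((p : ℝ) - 1) * r ^ (p - 2))) < 2 * ((p : ℝ) - 1) / p ∧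
    (1 - r ^ (2 * p - 2) - ((p : ℝ) - 1) * r ^ (p - 2) * (1 - r ^ 2)) /
        (1 + ((p : ℝ) * r ^ p - ((p : ℝ) - 1) * r ^ (p - 2))) < 2 * ((p : ℝ) - 1) / p := by
  obtain ⟨n, rfl⟩ : ∃ n, p = n + 2 := ⟨p - 2, by omega⟩
  have hn : 1 ≤ n := by omega
  simp only [show n + 2 - 2 = n from by omega, show 2 * (n + 2) - 2 = 2*n+2 from by omega]
    at hm hpl ⊢
  push_cast at hm hpl ⊢
  have hp0 : (0:ℝ) < (n:ℝ) + 2 := by positivity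
  have ht1 : |r| < 1 := abs_lt.mpr ⟨hr1, hr2⟩
  have ht0 : (0:ℝ) ≤ |r| := abs_nonneg r
  have h2 : r^2 = |r|^2 := (sq_abs r).symm
  have h2nn : (0:ℝ) ≤ r^(2*n+2) := by
    rw [show 2*n+2 = (n+1)*2 from by ring, pow_mul]; exact sq_nonneg _
  have h2n : r^(2*n+2) = |r|^(2*n+2) := by
    rw [← abs_pow, abs_of_nonneg h2nn]
  have hcases : r^n = |r|^n ∨ r^n = -(|r|^n) := by
    rcases abs_cases (r^n) with ⟨he, _⟩ | ⟨he, _⟩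
    · left; rw [← abs_pow, he]
    · right; rw [← abs_pow, he]; ring
  have key1 : 0 < (n:ℝ) + ((n:ℝ)+2)*r^(2*n+2) + ((n:ℝ)+1)*r^n*((n:ℝ) - ((n:ℝ)+2)*r^2) := by
    rw [h2, h2n]
    rcases hcases with he | he
    · rw [he]; exact aux_Hplus n hn (|r|) ht0 ht1
    · rw [he]
      have := aux_Hminus n hn (|r|) ht0 ht1
      nlinarith [this]
  have key2 : 0 < (n:ℝ) + ((n:ℝ)+2)*r^(2*n+2) - ((n:ℝ)+1)*r^n*((n:ℝ) - ((n:ℝ)+2)*r^2) := by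
    rw [h2, h2n]
    rcases hcases with he | he
    · rw [he]; exact aux_Hminus n hn (|r|) ht0 ht1
    · rw [he]
      have := aux_Hplus n hn (|r|) ht0 ht1
      nlinarith [this]
  constructor
  · rw [div_lt_div_iff₀ hm hp0]
    have hdiff : 2*((n:ℝ)+2-1) * (1 - (((n:ℝ)+2) * r^(n+2) - ((n:ℝ)+2-1) * r^n))
        - (1 - r^(2*n+2) + ((n:ℝ)+2-1) * r^n * (1 - r^2)) * ((n:ℝ)+2)
        = (n:ℝ) + ((n:ℝ)+2)*r^(2*n+2) + ((n:ℝ)+1)*r^n*((n:ℝ) - ((n:ℝ)+2)*r^2) := by ring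
    linarith
  · rw [div_lt_div_iff₀ hpl hp0]
    have hdiff : 2*((n:ℝ)+2-1) * (1 + (((n:ℝ)+2) * r^(n+2) - ((n:ℝ)+2-1) * r^n))
        - (1 - r^(2*n+2) - ((n:ℝ)+2-1) * r^n * (1 - r^2)) * ((n:ℝ)+2)
        = (n:ℝ) + ((n:ℝ)+2)*r^(2*n+2) - ((n:ℝ)+1)*r^n*((n:ℝ) - ((n:ℝ)+2)*r^2) := by ring
    linarith
end
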